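/- arXiv:math/0401087 — 4 statements merged into one kernel-verified Lean document; each statement's English description precedes it below -/
import Mathlib

section
/- Let Ξ be a set of affine functions on ℤ^∞[λ] such that S̄_k φ ∈ Ξ for every φ ∈ Ξ and every nonzero integer k, and set Σ := { x ∈ ℤ^∞[λ] : φ(x) ≥ 0 for all φ ∈ Ξ }. Then Σ is stable under the Kashiwara operators ẽ_p: if x ∈ Σ, p ∈ I, and ẽ_p x ≠ 0, then ẽ_p x ∈ Σ. -/
noncomputable section

/-- An affine function `φ(x) = c + Σ_k φ_k x_k` on `ℤ^∞[λ]`: a constant term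
together with a finitely supported family of coefficients indexed by the
nonzero integers (the coefficient at index `0` is always `0` below). -/
abbrev Aff : Type := ℚ × (ℤ →₀ ℚ)

/-- Evaluation of an affine function at a rational point. -/
def evalF (φ : Aff) (x : ℤ → ℚ) : ℚ := φ.1 + ∑ t ∈ φ.2.support, φ.2 t * x t

/-- Evaluation of an affine function at an integer point. -/
def evalZ (φ : Aff) (x : ℤ →₀ ℤ) : ℚ := φ.1 + ∑ t ∈ φ.2.support, φ.2 t * (x t : ℚ)

variable {I : Type*}

/-- `σ_k(x) = x_k + Σ_{j>k, j≠0} a_{i_k i_j} x_j` for `k ≥ 1`, with the extra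
constant `-ℓ_{i_k}` when `k ≤ -1`. -/
def sigmaG (a : I → I → ℤ) (ℓ : I → ℤ) (ι : ℤ → I) (k : ℤ) (x : ℤ →₀ ℤ) : ℤ :=
  (if k ≤ -1 then -ℓ (ι k) else 0) + x k +
    ∑ j ∈ x.support.filter (fun j => k < j ∧ j ≠ 0), a (ι k) (ι j) * x j

/-- The affine function `β̄_k = σ_k − σ_{k^{(+)}}`, given explicitly:
`β̄_k(x) = x_k + Σ_{k<j<k^{(+)}, j≠0} a_{i_k i_j} x_j + x_{k^{(+)}}`, plus the
constant `-ℓ_{i_k}` exactly when `k ≤ -1 < 1 ≤ k^{(+)}`. -/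
def betaBarG (a : I → I → ℤ) (ℓ : I → ℤ) (ι : ℤ → I) (kp : ℤ → ℤ) (k : ℤ) : Aff :=
  ⟨if k ≤ -1 ∧ 1 ≤ kp k then -(ℓ (ι k) : ℚ) else 0,
   Finsupp.onFinset (insert k (insert (kp k) (Finset.Ioo k (kp k))))
     (fun j => (if j = k then 1 else 0) + (if j = kp k then 1 else 0)
       + (if k < j ∧ j < kp k ∧ j ≠ 0 then (a (ι k) (ι j) : ℚ) else 0))
     (by
       intro j hj
       simp only [Finset.mem_insert, Finset.mem_Ioo]
       by_contra hc
       push_neg at hc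
       obtain ⟨h1, h2, h3⟩ := hc
       apply hj
       simp only [if_neg h1, if_neg h2,
         if_neg (show ¬(k < j ∧ j < kp k ∧ j ≠ 0) by omega)]
       ring)⟩

/-- The operator `S̄_k` on affine functions: `S̄_k φ = φ − φ_k β̄_k` if `φ_k > 0`
and `S̄_k φ = φ − φ_k β̄_{k^{(−)}}` if `φ_k ≤ 0`. -/
def SbarG (a : I → I → ℤ) (ℓ : I → ℤ) (ι : ℤ → I) (kp km : ℤ → ℤ) (k : ℤ) (φ : Aff) :
    Aff :=
  if 0 < φ.2 k then
    ⟨φ.1 - φ.2 k * (betaBarG a ℓ ι kp k).1, φ.2 - φ.2 k • (betaBarG a ℓ ι kp k).2⟩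
  else
    ⟨φ.1 - φ.2 k * (betaBarG a ℓ ι kp (km k)).1,
     φ.2 - φ.2 k • (betaBarG a ℓ ι kp (km k)).2⟩

end


section MyHelpers

lemma sum_mul_eq_sum_support (f : ℤ →₀ ℚ) (x : ℤ →₀ ℤ) :
    ∑ t ∈ f.support, f t * (x t : ℚ) = ∑ t ∈ x.support, f t * (x t : ℚ) := by
  have h1 : ∑ t ∈ f.support, f t * (x t : ℚ)
      = ∑ t ∈ f.support ∪ x.support, f t * (x t : ℚ) :=
    Finset.sum_subset Finset.subset_union_left
      (fun t _ ht => by simp [Finsupp.notMem_support_iff.mp ht])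
  have h2 : ∑ t ∈ x.support, f t * (x t : ℚ)
      = ∑ t ∈ f.support ∪ x.support, f t * (x t : ℚ) :=
    Finset.sum_subset Finset.subset_union_right
      (fun t _ ht => by simp [Finsupp.notMem_support_iff.mp ht])
  rw [h1, h2]

lemma evalZ_eq_sum_xsupport (φ : Aff) (x : ℤ →₀ ℤ) :
    evalZ φ x = φ.1 + ∑ t ∈ x.support, φ.2 t * (x t : ℚ) := by
  rw [evalZ, sum_mul_eq_sum_support]

lemma evalZ_sub_smul (c1 c2 q : ℚ) (f g : ℤ →₀ ℚ) (x : ℤ →₀ ℤ) :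
    evalZ (c1 - q * c2, f - q • g) x = evalZ (c1, f) x - q * evalZ (c2, g) x := by
  rw [evalZ_eq_sum_xsupport, evalZ_eq_sum_xsupport, evalZ_eq_sum_xsupport]
  simp only [Finsupp.sub_apply, Finsupp.smul_apply, smul_eq_mul]
  have h : ∑ t ∈ x.support, (f t - q * g t) * (x t : ℚ)
      = (∑ t ∈ x.support, f t * (x t : ℚ)) - q * ∑ t ∈ x.support, g t * (x t : ℚ) := by
    rw [Finset.mul_sum, ← Finset.sum_sub_distrib]
    exact Finset.sum_congr rfl fun t _ => by ring
  rw [h]; ring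

lemma evalZ_sub_single (φ : Aff) (x : ℤ →₀ ℤ) (m : ℤ) :
    evalZ φ (x - Finsupp.single m 1) = evalZ φ x - φ.2 m := by
  rw [evalZ, evalZ]
  have h : ∀ t ∈ φ.2.support, φ.2 t * (((x - Finsupp.single m 1 : ℤ →₀ ℤ) t : ℤ) : ℚ)
      = φ.2 t * (x t : ℚ) - (if t = m then φ.2 t else 0) := by
    intro t _
    rw [Finsupp.sub_apply, Finsupp.single_apply]
    split_ifs <;> push_cast <;> first | ring1 | (exfalso; omega)
  rw [Finset.sum_congr rfl h, Finset.sum_sub_distrib,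
    Finset.sum_ite_eq' φ.2.support m (fun t => φ.2 t)]
  by_cases hmem : m ∈ φ.2.support
  · rw [if_pos hmem]; ring
  · rw [if_neg hmem, Finsupp.notMem_support_iff.mp hmem]; ring

lemma evalZ_betaBar {I : Type*} (a : I → I → ℤ) (ha2 : ∀ p, a p p = 2)
    (ℓ : I → ℤ) (ι : ℤ → I) (kp : ℤ → ℤ) (m : ℤ)
    (hm : m ≠ 0) (hK0 : kp m ≠ 0) (hmK : m < kp m) (hιK : ι (kp m) = ι m)
    (x : ℤ →₀ ℤ) :
    evalZ (betaBarG a ℓ ι kp m) x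
      = ((sigmaG a ℓ ι m x - sigmaG a ℓ ι (kp m) x : ℤ) : ℚ) := by
  rw [evalZ_eq_sum_xsupport]
  have hconst : (betaBarG a ℓ ι kp m).1
      = (if m ≤ -1 then -(ℓ (ι m) : ℚ) else 0)
        - (if kp m ≤ -1 then -(ℓ (ι (kp m)) : ℚ) else 0) := by
    simp only [betaBarG, hιK]
    split_ifs <;> first | ring1 | (exfalso; omega)
  have hcoef : ∀ t : ℤ, (betaBarG a ℓ ι kp m).2 t
      = (if t = m then 1 else 0) + (if t = kp m then 1 else 0)
        + (if m < t ∧ t < kp m ∧ t ≠ 0 then (a (ι m) (ι t) : ℚ) else 0) := fun t => rfl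
  have hxm : ((x m : ℤ) : ℚ) = ∑ t ∈ x.support, (if t = m then (x t : ℚ) else 0) := by
    rw [Finset.sum_ite_eq' x.support m (fun t => ((x t : ℤ) : ℚ))]
    by_cases h : m ∈ x.support
    · rw [if_pos h]
    · rw [if_neg h, Finsupp.notMem_support_iff.mp h]; norm_num
  have hxK : ((x (kp m) : ℤ) : ℚ) = ∑ t ∈ x.support, (if t = kp m then (x t : ℚ) else 0) := by
    rw [Finset.sum_ite_eq' x.support (kp m) (fun t => ((x t : ℤ) : ℚ))]
    by_cases h : kp m ∈ x.support
    · rw [if_pos h]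
    · rw [if_neg h, Finsupp.notMem_support_iff.mp h]; norm_num
  have hsum1 : ∑ j ∈ x.support.filter (fun j => m < j ∧ j ≠ 0),
        (a (ι m) (ι j) : ℚ) * (x j : ℚ)
      = ∑ t ∈ x.support, (if m < t ∧ t ≠ 0 then (a (ι m) (ι t) : ℚ) * (x t : ℚ) else 0) :=
    Finset.sum_filter _ _
  have hsum2 : ∑ j ∈ x.support.filter (fun j => kp m < j ∧ j ≠ 0),
        (a (ι (kp m)) (ι j) : ℚ) * (x j : ℚ)
      = ∑ t ∈ x.support, (if kp m < t ∧ t ≠ 0 then (a (ι m) (ι t) : ℚ) * (x t : ℚ) else 0) := by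
    rw [hιK, Finset.sum_filter]
  have key : ∑ t ∈ x.support, (betaBarG a ℓ ι kp m).2 t * (x t : ℚ)
      = ∑ t ∈ x.support,
          (((if t = m then (x t : ℚ) else 0)
            + (if m < t ∧ t ≠ 0 then (a (ι m) (ι t) : ℚ) * (x t : ℚ) else 0))
           - ((if t = kp m then (x t : ℚ) else 0)
            + (if kp m < t ∧ t ≠ 0 then (a (ι m) (ι t) : ℚ) * (x t : ℚ) else 0))) := by
    refine Finset.sum_congr rfl fun t _ => ?_
    rw [hcoef t]
    by_cases htK : t = kp m
    · subst htK
      have h2 : (a (ι m) (ι (kp m)) : ℚ) = 2 := by rw [hιK, ha2]; norm_num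
      rw [h2]
      split_ifs <;> first | ring1 | (exfalso; omega)
    · split_ifs <;> first | ring1 | (exfalso; omega)
  rw [key, hconst]
  simp only [sigmaG]
  push_cast
  rw [hxm, hxK, hsum1, hsum2, Finset.sum_sub_distrib, Finset.sum_add_distrib,
    Finset.sum_add_distrib]
  ring

end MyHelpers

/-- Polyhedral realization, type-free setting (Hoshino–Nakashima, Lemma 4.3,
`ẽ` part).  Data: a finite index set `I`, a generalized Cartan matrix `a`,
the pairings `ℓ p = ⟨h_p, λ⟩`, a sequence `ι` (indexed by the nonzero
integers; the value `ι 0` is irrelevant) satisfying the usual conditions,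
and the functions `kp`, `km` giving `k^{(+)}` and `k^{(−)}`.
If `Ξ` is a set of affine functions on `ℤ^∞[λ]` closed under all `S̄_k`,
`Σ = {x : φ(x) ≥ 0 ∀ φ ∈ Ξ}`, `x ∈ Σ`, and `m = max M^{(p)}(x)` (for
`p = ι m`), i.e. `σ_m(x)` is the maximum of the `σ_k(x)` over `{k ≠ 0 : ι k = p}`
and `m` is the greatest index attaining it — so `ẽ_p x ≠ 0` and
`ẽ_p x = x − δ_m` — then `ẽ_p x ∈ Σ`. -/
theorem sigma_stable_under_etilde
    {I : Type*} [Fintype I] [DecidableEq I]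
    (a : I → I → ℤ) (ha2 : ∀ p, a p p = 2) (haneg : ∀ p q, p ≠ q → a p q ≤ 0)
    (hasym : ∀ p q, a p q = 0 ↔ a q p = 0)
    (ℓ : I → ℤ) (ι : ℤ → I)
    (hι₁ : ∀ k : ℤ, 1 ≤ k → ι k ≠ ι (k + 1))
    (hι₂ : ∀ k : ℤ, k ≤ -1 → ι (k - 1) ≠ ι k)
    (hιinfP : ∀ p : I, {k : ℤ | 1 ≤ k ∧ ι k = p}.Infinite)
    (hιinfN : ∀ p : I, {k : ℤ | k ≤ -1 ∧ ι k = p}.Infinite)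
    (kp km : ℤ → ℤ)
    (hkp : ∀ k : ℤ, k ≠ 0 → k < kp k ∧ kp k ≠ 0 ∧ ι (kp k) = ι k ∧
      ∀ l : ℤ, k < l → l < kp k → l ≠ 0 → ι l ≠ ι k)
    (hkm : ∀ k : ℤ, k ≠ 0 → km k < k ∧ km k ≠ 0 ∧ ι (km k) = ι k ∧
      ∀ l : ℤ, km k < l → l < k → l ≠ 0 → ι l ≠ ι k)
    (Ξ : Set Aff)
    (hΞ0 : ∀ φ ∈ Ξ, φ.2 0 = 0)
    (hΞcl : ∀ φ ∈ Ξ, ∀ k : ℤ, k ≠ 0 → SbarG a ℓ ι kp km k φ ∈ Ξ)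
    (x : ℤ →₀ ℤ) (hx0 : x 0 = 0)
    (hxSig : ∀ φ ∈ Ξ, 0 ≤ evalZ φ x)
    (m : ℤ) (hm : m ≠ 0)
    (hmax : ∀ k : ℤ, k ≠ 0 → ι k = ι m → sigmaG a ℓ ι k x ≤ sigmaG a ℓ ι m x)
    (hgrt : ∀ k : ℤ, k ≠ 0 → ι k = ι m → sigmaG a ℓ ι k x = sigmaG a ℓ ι m x → k ≤ m) :
    ∀ φ ∈ Ξ, 0 ≤ evalZ φ (x - Finsupp.single m 1) := by
  intro φ hφ
  rw [evalZ_sub_single]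
  by_cases h : 0 < φ.2 m
  · obtain ⟨hmK, hK0, hιK, -⟩ := hkp m hm
    have hβval := evalZ_betaBar a ha2 ℓ ι kp m hm hK0 hmK hιK x
    have hσle : sigmaG a ℓ ι (kp m) x ≤ sigmaG a ℓ ι m x := hmax _ hK0 hιK
    have hσne : sigmaG a ℓ ι (kp m) x ≠ sigmaG a ℓ ι m x := by
      intro he
      have := hgrt _ hK0 hιK he
      omega
    have hβ1 : (1 : ℚ) ≤ evalZ (betaBarG a ℓ ι kp m) x := by
      rw [hβval]
      have h1 : (1 : ℤ) ≤ sigmaG a ℓ ι m x - sigmaG a ℓ ι (kp m) x := by omega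
      exact_mod_cast h1
    have hψ := hΞcl φ hφ m hm
    rw [SbarG, if_pos h] at hψ
    have h0 := hxSig _ hψ
    have heq : evalZ (φ.1 - φ.2 m * (betaBarG a ℓ ι kp m).1,
        φ.2 - φ.2 m • (betaBarG a ℓ ι kp m).2) x
        = evalZ φ x - φ.2 m * evalZ (betaBarG a ℓ ι kp m) x := by
      rw [evalZ_sub_smul φ.1 (betaBarG a ℓ ι kp m).1 (φ.2 m) φ.2 (betaBarG a ℓ ι kp m).2 x]
    rw [heq] at h0
    nlinarith [mul_le_mul_of_nonneg_left hβ1 h.le]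
  · push_neg at h
    have h0 := hxSig φ hφ
    linarith
end

section
/- Let x_0 be the family with (x_0)_{−j;i} = −C_{−j;i} for all j ≥ 1 and 1 ≤ i ≤ n, and for j ≥ 1, 1 ≤ i ≤ n set D_{−j;i} := σ_{−j;i}(x_0) + C_{−j;i}. Then: (i) if D_{−j;i} ≤ 0, then C_{−j;i} = 0; (ii) if D_{−j;i} > 0, then D_{−j;i} = C_{−j;i}. -/
noncomputable section

/-- `C_{−j;i} = max(0, −λ_{i−j+1}, −λ_{i−j+1}−λ_{i−j+2}, …,
−λ_{i−j+1}−⋯−λ_{n−j+1})` if `1 ≤ j ≤ i ≤ n`, and `0` otherwise. -/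
def CA (lam : ℤ → ℤ) (n j i : ℤ) : ℤ :=
  if 1 ≤ j ∧ j ≤ i ∧ i ≤ n then
    (Finset.Icc (i - j + 1) (n - j + 1)).fold max 0
      (fun m => -(∑ t ∈ Finset.Icc (i - j + 1) m, lam t))
  else 0

/-- The coordinate `x_{−j';i'}` of a family, with the convention that it is `0`
unless `1 ≤ i' ≤ n`. -/
def XA (n : ℤ) (x : ℤ → ℤ → ℤ) (j' i' : ℤ) : ℤ :=
  if 1 ≤ i' ∧ i' ≤ n then x j' i' else 0

/-- `σ_{−j;i}(x) = −λ_i + x_{−j;i} − x_{−j;i+1}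
+ Σ_{j'=1}^{j−1} (2 x_{−j';i} − x_{−j';i−1} − x_{−j';i+1})`;
here `x j i` denotes the coordinate `x_{−j;i}`. -/
def sigmaA (lam : ℤ → ℤ) (n : ℤ) (x : ℤ → ℤ → ℤ) (j i : ℤ) : ℤ :=
  -lam i + XA n x j i - XA n x j (i + 1) +
    ∑ j' ∈ Finset.Icc 1 (j - 1),
      (2 * XA n x j' i - XA n x j' (i - 1) - XA n x j' (i + 1))

end

/-!
Because `λ` is positive and then nonpositive, the partial sums `∑_{t=a}^{m} λ_t` first rise
and then fall in `m`, so `C_{−j;i}` is just the negative part of the block sum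
`∑_{t=i−j+1}^{n−j+1} λ_t`. Write `g(m, R)` for the negative part of `∑_{t=m}^{R} λ_t` and
`δ(m, R) = g(m, R) − g(m+1, R)`. Telescoping in `j` turns the definition of `D` into
`C_{−j;i} − D_{−j;i} = (λ_i + δ(i, n)) + ∑_{j'<j} (δ(i−j', n−j') − δ(i−j', n−j'+1))`,
and all terms on the right are nonnegative (`δ(m, R)` is antitone in `R`), so `D ≤ C`.
If the block sum is negative, every block sum involved is nonpositive, `g` is linear on
them and the right side vanishes, so `D = C > 0`; otherwise `C = 0 ≥ D`. For `j > i`,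
`D_{−j;i} = D_{−i;i} + C_{−(i+1);i+1} − 2 C_{−i;i} ≤ C_{−(i+1);i+1} − C_{−i;i} ≤ 0`.
-/

open Finset

theorem sum_Icc_sub_telescope {M : Type*} [AddCommGroup M] (F : ℤ → M) {a b : ℤ}
    (hab : a ≤ b + 1) : ∑ j ∈ Icc a b, (F (j + 1) - F j) = F (b + 1) - F a := by
  induction b, (by omega : a - 1 ≤ b) using Int.leInduction with
  | base => simp
  | succ b hb ih =>
    rw [← insert_Icc_right_eq_Icc_add_one (by omega), sum_insert (by simp), ih (by omega)]
    abel

def PosThenNonpos (lam : ℤ → ℤ) (n : ℤ) : Prop :=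
  ∀ ⦃a b : ℤ⦄, 1 ≤ a → a ≤ b → b ≤ n → lam a ≤ 0 → lam b ≤ 0

noncomputable def blockSum (lam : ℤ → ℤ) (p q : ℤ) : ℤ := ∑ t ∈ Icc p q, lam t

section BlockSum

variable {lam : ℤ → ℤ} {n a k m p q r N R : ℤ}

theorem blockSum_add_blockSum (hpq : p ≤ q + 1) (hqr : q ≤ r) :
    blockSum lam p q + blockSum lam (q + 1) r = blockSum lam p r := by
  rw [blockSum, blockSum, ← sum_union (disjoint_left.2 fun t ht ht' => by
    simp only [mem_Icc] at ht ht'; omega)]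
  congr 1
  ext t
  simp only [mem_Icc, mem_union]
  omega

theorem blockSum_eq_add_blockSum (h : p ≤ q) :
    blockSum lam p q = lam p + blockSum lam (p + 1) q := by
  rw [blockSum, ← insert_Icc_add_one_left_eq_Icc h, sum_insert (by simp), blockSum]

theorem blockSum_add_one_right (h : p ≤ q + 1) :
    blockSum lam p (q + 1) = blockSum lam p q + lam (q + 1) := by
  rw [blockSum, ← insert_Icc_right_eq_Icc_add_one h, sum_insert (by simp), add_comm, blockSum]

theorem blockSum_of_lt (h : q < p) : blockSum lam p q = 0 := by
  rw [blockSum, Icc_eq_empty_of_lt h, sum_empty]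

theorem blockSum_nonpos (hlam : PosThenNonpos lam n) (hk : 1 ≤ k) (hkp : k ≤ p) (hq : q ≤ n)
    (hk0 : lam k ≤ 0) : blockSum lam p q ≤ 0 :=
  sum_nonpos fun t ht => by
    rw [mem_Icc] at ht
    exact hlam hk (by omega) (by omega) hk0

theorem blockSum_nonneg (hlam : PosThenNonpos lam n) (hp : 1 ≤ p) (hqk : q ≤ k) (hk : k ≤ n)
    (hk0 : 0 < lam k) : 0 ≤ blockSum lam p q :=
  sum_nonneg fun t ht => by
    rw [mem_Icc] at ht
    by_contra! ht0
    exact (hlam (by omega) (by omega) hk ht0.le).not_gt hk0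

theorem blockSum_nonpos_of_neg (hlam : PosThenNonpos lam n) (ha : 1 ≤ a) (hN : N ≤ n)
    (hneg : blockSum lam a N < 0) (ham : a ≤ m) (hNR : N ≤ R) (hR : R ≤ n) :
    blockSum lam m R ≤ 0 := by
  rcases lt_or_ge R m with hRm | hmR
  · exact (blockSum_of_lt hRm).le
  rcases le_or_gt (lam m) 0 with hm0 | hm0
  · exact blockSum_nonpos hlam (by omega) le_rfl hR hm0
  have haN : a ≤ N := by
    by_contra! hNa
    rw [blockSum_of_lt hNa] at hneg
    exact hneg.false
  have hN0 : lam N ≤ 0 := by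
    by_contra! hN0
    exact (blockSum_nonneg hlam ha le_rfl hN hN0).not_gt hneg
  have hbefore : 0 ≤ blockSum lam a (m - 1) := blockSum_nonneg hlam ha (by omega) (by omega) hm0
  have hafter : blockSum lam (N + 1) R ≤ 0 := blockSum_nonpos hlam (by omega) (by omega) hR hN0
  have hsplit_m := blockSum_add_blockSum (lam := lam) (p := a) (q := m - 1) (r := R)
    (by omega) (by omega)
  have hsplit_N := blockSum_add_blockSum (lam := lam) (by omega : a ≤ N + 1) hNR
  rw [sub_add_cancel] at hsplit_m
  linarith

theorem negPart_blockSum_le_add_one (hlam : PosThenNonpos lam n) (hp : 1 ≤ p)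
    (hpq : p ≤ q + 1) (hq : q + 1 ≤ n) :
    (blockSum lam p q)⁻ ≤ (blockSum lam p (q + 1))⁻ := by
  rw [blockSum_add_one_right hpq]
  rcases le_or_gt (lam (q + 1)) 0 with h0 | h0
  · simp only [negPart_def]
    omega
  · rw [negPart_eq_zero.2 (blockSum_nonneg hlam hp (by omega) hq h0)]
    exact negPart_nonneg _

end BlockSum

noncomputable def negPartDiff (lam : ℤ → ℤ) (m R : ℤ) : ℤ :=
  (blockSum lam m R)⁻ - (blockSum lam (m + 1) R)⁻

section NegPartDiff

variable {lam : ℤ → ℤ} {n a i m N R : ℤ}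

theorem negPartDiff_add_one_right_le (hlam : PosThenNonpos lam n) (hm : 1 ≤ m) (hmR : m ≤ R)
    (hR : R < n) : negPartDiff lam m (R + 1) ≤ negPartDiff lam m R := by
  rw [negPartDiff, negPartDiff, blockSum_eq_add_blockSum (by omega : m ≤ R + 1),
    blockSum_eq_add_blockSum hmR, blockSum_add_one_right (by omega : m + 1 ≤ R + 1)]
  rcases le_or_gt (lam m) 0 with hm0 | hm0
  · have := blockSum_nonpos hlam hm (by omega : m ≤ m + 1) hR.le hm0
    have := hlam hm (by omega : m ≤ R + 1) hR hm0
    simp only [negPart_def]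
    omega
  rcases le_or_gt (lam (R + 1)) 0 with hR0 | hR0
  · simp only [negPart_def]
    omega
  · have := blockSum_nonneg hlam (p := m + 1) (by omega) (by omega : R ≤ R + 1) hR hR0
    simp only [negPart_def]
    omega

theorem neg_le_negPartDiff (hlam : PosThenNonpos lam n) (hi : 1 ≤ i) (hiR : i ≤ R)
    (hR : R ≤ n) : -lam i ≤ negPartDiff lam i R := by
  rw [negPartDiff, blockSum_eq_add_blockSum hiR]
  rcases le_or_gt (lam i) 0 with hi0 | hi0
  · have := blockSum_nonpos hlam hi (by omega : i ≤ i + 1) hR hi0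
    simp only [negPart_def]
    omega
  · simp only [negPart_def]
    omega

theorem negPartDiff_eq_neg_of_blockSum_neg (hlam : PosThenNonpos lam n) (ha : 1 ≤ a)
    (hN : N ≤ n) (hneg : blockSum lam a N < 0) (ham : a ≤ m) (hmR : m ≤ R) (hNR : N ≤ R)
    (hR : R ≤ n) : negPartDiff lam m R = -lam m := by
  rw [negPartDiff,
    negPart_eq_neg.2 (blockSum_nonpos_of_neg hlam ha hN hneg ham hNR hR),
    negPart_eq_neg.2 (blockSum_nonpos_of_neg hlam ha hN hneg (by omega) hNR hR),
    blockSum_eq_add_blockSum hmR]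
  ring

end NegPartDiff

section CA

variable {lam : ℤ → ℤ} {n i j : ℤ}

theorem CA_eq_zero (h : ¬(1 ≤ j ∧ j ≤ i ∧ i ≤ n)) : CA lam n j i = 0 := if_neg h

theorem CA_eq_negPart_blockSum (hlam : PosThenNonpos lam n) (hj : 1 ≤ j) (hji : j ≤ i)
    (hin : i ≤ n + 1) : CA lam n j i = (blockSum lam (i - j + 1) (n - j + 1))⁻ := by
  obtain rfl | hin := hin.eq_or_lt
  · rw [CA_eq_zero (by omega), blockSum_of_lt (by omega), negPart_zero]
  rw [CA, if_pos ⟨hj, hji, by omega⟩, negPart_def]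
  refine le_antisymm ((fold_max_le _).2 ⟨le_max_right _ _, fun m hm => ?_⟩) (max_le ?_ ?_)
  · rw [mem_Icc] at hm
    change -blockSum lam (i - j + 1) m ≤ _
    rcases le_or_gt (lam m) 0 with hm0 | hm0
    · have := blockSum_add_blockSum (lam := lam) (p := i - j + 1) (q := m) (by omega) hm.2
      have := blockSum_nonpos hlam (p := m + 1) (q := n - j + 1) (by omega) (by omega : m ≤ m + 1)
        (by omega) hm0
      exact le_max_of_le_left (by linarith)
    · have := blockSum_nonneg hlam (p := i - j + 1) (by omega) le_rfl (by omega) hm0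
      exact le_max_of_le_right (by linarith)
  · exact (le_fold_max _).2 (Or.inr ⟨n - j + 1, mem_Icc.2 ⟨by omega, le_rfl⟩, le_rfl⟩)
  · exact (le_fold_max _).2 (Or.inl le_rfl)

theorem XA_neg_CA (lam : ℤ → ℤ) (n j i : ℤ) :
    XA n (fun j' i' => -CA lam n j' i') j i = -CA lam n j i := by
  unfold XA
  split_ifs with h
  · rfl
  · rw [CA_eq_zero (by omega), neg_zero]

end CA

noncomputable def DA (lam : ℤ → ℤ) (n j i : ℤ) : ℤ :=
  sigmaA lam n (fun j' i' => -CA lam n j' i') j i + CA lam n j i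

section DA

variable {lam : ℤ → ℤ} {n i j : ℤ}

theorem DA_eq (lam : ℤ → ℤ) (n j i : ℤ) :
    DA lam n j i = -lam i + CA lam n j (i + 1) +
      ∑ j' ∈ Icc 1 (j - 1), (CA lam n j' (i - 1) - 2 * CA lam n j' i + CA lam n j' (i + 1)) := by
  simp only [DA, sigmaA, XA_neg_CA]
  rw [sum_congr rfl fun j' _ => show 2 * -CA lam n j' i - -CA lam n j' (i - 1) -
    -CA lam n j' (i + 1) = CA lam n j' (i - 1) - 2 * CA lam n j' i + CA lam n j' (i + 1) by ring]
  ring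

theorem CA_sub_DA (hlam : PosThenNonpos lam n) (hj : 1 ≤ j) (hji : j ≤ i) (hin : i ≤ n) :
    CA lam n j i - DA lam n j i = (lam i + negPartDiff lam i n) +
      ∑ j' ∈ Icc 1 (j - 1),
        (negPartDiff lam (i - j') (n - j') - negPartDiff lam (i - j') (n - j' + 1)) := by
  set H : ℤ → ℤ := fun j' => negPartDiff lam (i - j' + 1) (n - j' + 1)
  have hterm : ∀ j' ∈ Icc 1 (j - 1),
      CA lam n j' (i - 1) - 2 * CA lam n j' i + CA lam n j' (i + 1) =
        (H (j' + 1) - H j') -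
          (negPartDiff lam (i - j') (n - j') - negPartDiff lam (i - j') (n - j' + 1)) := by
    intro j' hj'
    rw [mem_Icc] at hj'
    rw [CA_eq_negPart_blockSum hlam hj'.1 (by omega) (by omega),
      CA_eq_negPart_blockSum hlam hj'.1 (by omega) (by omega),
      CA_eq_negPart_blockSum hlam hj'.1 (by omega) (by omega)]
    simp only [H, negPartDiff]
    ring_nf
  rw [DA_eq, sum_congr rfl hterm, sum_sub_distrib, sum_Icc_sub_telescope H (by omega),
    CA_eq_negPart_blockSum hlam hj hji (by omega),
    CA_eq_negPart_blockSum hlam hj (by omega) (by omega)]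
  simp only [H, negPartDiff]
  ring_nf

theorem DA_le_CA (hlam : PosThenNonpos lam n) (hj : 1 ≤ j) (hji : j ≤ i) (hin : i ≤ n) :
    DA lam n j i ≤ CA lam n j i := by
  have hfirst := neg_le_negPartDiff hlam (by omega) hin le_rfl
  have hrest : 0 ≤ ∑ j' ∈ Icc 1 (j - 1),
      (negPartDiff lam (i - j') (n - j') - negPartDiff lam (i - j') (n - j' + 1)) :=
    sum_nonneg fun j' hj' => by
      rw [mem_Icc] at hj'
      linarith [negPartDiff_add_one_right_le hlam (m := i - j') (R := n - j') (by omega)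
        (by omega) (by omega)]
  linarith [CA_sub_DA hlam hj hji hin]

theorem DA_eq_CA_of_blockSum_neg (hlam : PosThenNonpos lam n) (hj : 1 ≤ j) (hji : j ≤ i)
    (hin : i ≤ n) (hneg : blockSum lam (i - j + 1) (n - j + 1) < 0) :
    DA lam n j i = CA lam n j i := by
  have hfirst : lam i + negPartDiff lam i n = 0 := by
    rw [negPartDiff_eq_neg_of_blockSum_neg hlam (by omega) (by omega) hneg (by omega) hin
      (by omega) le_rfl]
    ring
  have hrest : ∑ j' ∈ Icc 1 (j - 1),
      (negPartDiff lam (i - j') (n - j') - negPartDiff lam (i - j') (n - j' + 1)) = 0 :=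
    sum_eq_zero fun j' hj' => by
      rw [mem_Icc] at hj'
      rw [negPartDiff_eq_neg_of_blockSum_neg hlam (by omega) (by omega) hneg (by omega)
          (by omega) (by omega) (by omega),
        negPartDiff_eq_neg_of_blockSum_neg hlam (by omega) (by omega) hneg (by omega)
          (by omega) (by omega) (by omega), sub_self]
  linarith [CA_sub_DA hlam hj hji hin]

theorem DA_add_one_left (hj : 1 ≤ j) :
    DA lam n (j + 1) i = DA lam n j i + CA lam n (j + 1) (i + 1) - CA lam n j (i + 1) +
      (CA lam n j (i - 1) - 2 * CA lam n j i + CA lam n j (i + 1)) := by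
  have hIcc := insert_Icc_right_eq_Icc_add_one (a := (1 : ℤ)) (b := j - 1) (by omega)
  rw [sub_add_cancel] at hIcc
  rw [DA_eq, DA_eq, add_sub_cancel_right, ← hIcc, sum_insert (by simp)]
  ring

theorem DA_eq_of_lt (hi : 1 ≤ i) (hij : i < j) :
    DA lam n j i = DA lam n i i + CA lam n (i + 1) (i + 1) - 2 * CA lam n i i := by
  induction j, (hij : i + 1 ≤ j) using Int.leInduction with
  | base =>
    rw [DA_add_one_left hi, CA_eq_zero (j := i) (i := i - 1) (by omega)]
    ring
  | succ j hj ih =>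
    rw [DA_add_one_left (by omega), ih, CA_eq_zero (j := j + 1) (i := i + 1) (by omega),
      CA_eq_zero (j := j) (i := i - 1) (by omega), CA_eq_zero (j := j) (i := i) (by omega)]
    ring

theorem DA_nonpos_of_lt (hlam : PosThenNonpos lam n) (hi : 1 ≤ i) (hin : i ≤ n) (hij : i < j) :
    DA lam n j i ≤ 0 := by
  have hdiag := DA_le_CA hlam hi le_rfl hin
  have hmono : CA lam n (i + 1) (i + 1) ≤ CA lam n i i := by
    rw [CA_eq_negPart_blockSum hlam (by omega) le_rfl (by omega),
      CA_eq_negPart_blockSum hlam hi le_rfl (by omega)]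
    convert negPart_blockSum_le_add_one hlam le_rfl (by omega : (1 : ℤ) ≤ n - i + 1)
      (by omega : n - i + 1 ≤ n) using 3 <;> ring
  rw [DA_eq_of_lt hi hij]
  linarith

theorem DA_nonpos_and_CA_eq_zero_or_DA_eq_CA_pos (hlam : PosThenNonpos lam n) (hj : 1 ≤ j)
    (hi : 1 ≤ i) (hin : i ≤ n) :
    (DA lam n j i ≤ 0 ∧ CA lam n j i = 0) ∨ (DA lam n j i = CA lam n j i ∧ 0 < CA lam n j i) := by
  rcases lt_or_ge i j with hij | hji
  · exact Or.inl ⟨DA_nonpos_of_lt hlam hi hin hij, CA_eq_zero (by omega)⟩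
  have hC := CA_eq_negPart_blockSum hlam hj hji (by omega)
  rcases lt_or_ge (blockSum lam (i - j + 1) (n - j + 1)) 0 with hneg | hnonneg
  · refine Or.inr ⟨DA_eq_CA_of_blockSum_neg hlam hj hji hin hneg, ?_⟩
    rw [hC, negPart_eq_neg.2 hneg.le]
    linarith
  · have hC0 : CA lam n j i = 0 := by rw [hC, negPart_eq_zero.2 hnonneg]
    exact Or.inl ⟨hC0 ▸ DA_le_CA hlam hj hji hin, hC0⟩

end DA

theorem D_le_zero_imp_C_eq_zero_and_D_pos_imp_D_eq_C_A_n_general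
    (n : ℤ) (lam : ℤ → ℤ) (i0 : ℤ)
    (hpos : ∀ i : ℤ, 1 ≤ i → i ≤ i0 → 0 < lam i)
    (hneg : ∀ i : ℤ, i0 < i → i ≤ n → lam i ≤ 0)
    (D : ℤ → ℤ → ℤ)
    (hD : ∀ j i : ℤ, D j i =
      sigmaA lam n (fun j' i' => -CA lam n j' i') j i + CA lam n j i) :
    ∀ j i : ℤ, 1 ≤ j → 1 ≤ i → i ≤ n →
      (D j i ≤ 0 → CA lam n j i = 0) ∧ (0 < D j i → D j i = CA lam n j i) := by
  have hlam : PosThenNonpos lam n := fun a b ha hab hbn ha0 =>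
    hneg b (lt_of_lt_of_le (not_le.1 fun hai => (hpos a ha hai).not_ge ha0) hab) hbn
  intro j i hj hi hin
  have hDA : D j i = DA lam n j i := hD j i
  rcases DA_nonpos_and_CA_eq_zero_or_DA_eq_CA_pos hlam hj hi hin with h | h <;>
    constructor <;> intro <;> omega

/-- Type `A_n` (Hoshino–Nakashima, Lemma 5.5): with `x₀` the vector with
coordinates `(x₀)_{−j;i} = −C_{−j;i}` and `D_{−j;i} := σ_{−j;i}(x₀) + C_{−j;i}`,
one has, for all `j ≥ 1` and `1 ≤ i ≤ n`:
(i) if `D_{−j;i} ≤ 0` then `C_{−j;i} = 0`; (ii) if `D_{−j;i} > 0` then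
`D_{−j;i} = C_{−j;i}`. -/
theorem D_le_zero_imp_C_eq_zero_and_D_pos_imp_D_eq_C_A_n
    (n : ℤ) (hn : 1 ≤ n) (lam : ℤ → ℤ) (i0 : ℤ) (hi0 : 0 ≤ i0) (hi0n : i0 ≤ n)
    (hpos : ∀ i : ℤ, 1 ≤ i → i ≤ i0 → 0 < lam i)
    (hneg : ∀ i : ℤ, i0 < i → i ≤ n → lam i ≤ 0)
    (D : ℤ → ℤ → ℤ)
    (hD : ∀ j i : ℤ, D j i =
      sigmaA lam n (fun j' i' => -CA lam n j' i') j i + CA lam n j i) :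
    ∀ j i : ℤ, 1 ≤ j → 1 ≤ i → i ≤ n →
      (D j i ≤ 0 → CA lam n j i = 0) ∧ (0 < D j i → D j i = CA lam n j i) :=
  D_le_zero_imp_C_eq_zero_and_D_pos_imp_D_eq_C_A_n_general n lam i0 hpos hneg D hD
end

section
/- Every φ ∈ Ξ'_ι[λ] has nonnegative constant term: φ(0) ≥ 0. (Equivalently, the zero vector lies in Σ'_ι[λ] = { x : φ(x) ≥ 0 for all φ ∈ Ξ'_ι[λ] }; this is the key step showing that the connected component B_0(λ) is contained in Σ_ι[λ] ∩ Σ'_ι[λ] in Theorem 5.2.) -/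
noncomputable section

/-- Position `(b;c) ↦ (b−1)n+c` for a positive block index `b ≥ 1`, and
`(b;c) ↦ bn+c−1` for a negative block index `b ≤ −1`. -/
def posIdx (n b c : ℤ) : ℤ := if 0 < b then (b - 1) * n + c else b * n + c - 1

/-- The sequence `ι = (…,2,1,n,…,2,1,t_λ,n,n−1,…,1,n,n−1,…)` of type `A_n`:
`i_{(j−1)n+i} = i` and `i_{−jn+i−1} = i` for `j ≥ 1`, `1 ≤ i ≤ n`. -/
def iseqA (n k : ℤ) : ℤ := if 0 < k then (k - 1) % n + 1 else k % n + 1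

/-- The Cartan matrix of type `A_n`. -/
def aA (p q : ℤ) : ℤ := if p = q then 2 else if p = q + 1 ∨ q = p + 1 then -1 else 0

/-- `k^{(+)}` for the type `A_n` sequence. -/
def kpA (n k : ℤ) : ℤ := if -n ≤ k ∧ k ≤ -1 then k + n + 1 else k + n

/-- `k^{(−)}` for the type `A_n` sequence. -/
def kmA (n k : ℤ) : ℤ := if 1 ≤ k ∧ k ≤ n then k - n - 1 else k - n

/-- The operator `S̄` at position `k` for the type `A_n` sequence and weight
coefficients `lam i = λ_i`. -/
def SbarA (n : ℤ) (lam : ℤ → ℤ) (k : ℤ) (φ : Aff) : Aff :=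
  SbarG aA lam (iseqA n) (kpA n) (kmA n) k φ

/-- The generator `x_{−j;i} + C_{−j;i}` of `Ξ'_ι[λ]`, as an affine function. -/
def genA (n : ℤ) (lam : ℤ → ℤ) (j i : ℤ) : Aff :=
  ⟨(CA lam n j i : ℚ), Finsupp.single (posIdx n (-j) i) 1⟩

/-- `Ξ'_ι[λ] = { S̄_{−j_l} ⋯ S̄_{−j_1}(x_{−j;i} + C_{−j;i}) :
l ≥ 0, j ≥ 1, 1 ≤ i ≤ n, j_1,…,j_l ≥ 1 }` for type `A_n`. -/
def XiPrimeA (n : ℤ) (lam : ℤ → ℤ) : Set Aff :=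
  { φ | ∃ js : List ℤ, (∀ m ∈ js, 1 ≤ m) ∧ ∃ j i : ℤ, 1 ≤ j ∧ 1 ≤ i ∧ i ≤ n ∧
      φ = js.foldl (fun ψ m => SbarA n lam (-m) ψ) (genA n lam j i) }

/-- `S̄^{(l)}_{b;c} = S̄_{b;c+l−1} ⋯ S̄_{b;c+1} S̄_{b;c}` (the identity for
`l = 0`), where `S̄_{b;c}` is `S̄` at the position `(b;c)`. -/
def SbarPowA (n : ℤ) (lam : ℤ → ℤ) (b c : ℤ) : ℕ → Aff → Aff
  | 0, φ => φ
  | l + 1, φ => SbarA n lam (posIdx n b (c + l)) (SbarPowA n lam b c l φ)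

/-- `μ = (μ_1,…,μ_i)` is an `i`-admissible partition:
`n−i+1 ≥ μ_1 ≥ μ_2 ≥ ⋯ ≥ μ_i ≥ 0`. -/
def admissibleA (n i : ℤ) (μ : ℤ → ℤ) : Prop :=
  μ 1 ≤ n - i + 1 ∧ (∀ k : ℤ, 1 ≤ k → k < i → μ (k + 1) ≤ μ k) ∧ 0 ≤ μ i

/-- `φ^{(μ)}_{−j;i} = S̄^{(μ_i)}_{b_i;1} S̄^{(μ_{i−1})}_{b_{i−1};2} ⋯
S̄^{(μ_1)}_{b_1;i} (x_{−j;i})`, where `b_k = −j+k−1` for `1 ≤ k ≤ j` and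
`b_k = k−j` for `k > j`. -/
def phiMuA (n : ℤ) (lam : ℤ → ℤ) (j i : ℤ) (μ : ℤ → ℤ) : Aff :=
  (List.range i.toNat).foldl
    (fun ψ k0 =>
      SbarPowA n lam
        (if ((k0 : ℤ) + 1) ≤ j then -j + ((k0 : ℤ) + 1) - 1 else ((k0 : ℤ) + 1) - j)
        (i - ((k0 : ℤ) + 1) + 1) (μ ((k0 : ℤ) + 1)).toNat ψ)
    ⟨0, Finsupp.single (posIdx n (-j) i) 1⟩

/-- `θ(t) = 1` for `t ≥ 0` and `θ(t) = 0` for `t < 0`. -/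
def theta (t : ℤ) : ℤ := if 0 ≤ t then 1 else 0

/-- The coordinate `x_{b;c}` of `x`, with the convention that it is `0`
unless `1 ≤ c ≤ n`. -/
def XcA (n : ℤ) (x : ℤ → ℚ) (b c : ℤ) : ℚ :=
  if 1 ≤ c ∧ c ≤ n then x (posIdx n b c) else 0

end


noncomputable section HNproof

/-- `term b c` : the single coefficient `x_{(b;c)}`, zero when `c ∉ [1,n]`. -/
def termF (n b c : ℤ) : ℤ →₀ ℚ :=
  if 1 ≤ c ∧ c ≤ n then Finsupp.single (posIdx n b c) 1 else 0

/-- block of stage `k`. -/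
def bkF (j k : ℤ) : ℤ := if k ≤ j then k - j - 1 else k - j

def PhiCoef (n j i : ℤ) (μ : ℤ → ℤ) : ℤ →₀ ℚ :=
  ∑ k ∈ Finset.Icc 1 (i + 1),
    (termF n (bkF j k) (i - k + 1 + μ k) - termF n (bkF j k) (i - k + 1 + μ (k - 1)))

def PhiConst (lam : ℤ → ℤ) (n j i : ℤ) (μ : ℤ → ℤ) : ℚ :=
  (CA lam n j i : ℚ) + ∑ t ∈ Finset.Icc (i - j + 1) (i - j + μ j), (lam t : ℚ)

def Adm (n i : ℤ) (μ : ℤ → ℤ) : Prop :=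
  μ 0 = n - i + 2 ∧ (∀ k, i + 1 ≤ k → μ k = 0) ∧
    (∀ k, 1 ≤ k → μ k ≤ μ (k - 1)) ∧ (∀ k, 1 ≤ k → 0 ≤ μ k ∧ μ k ≤ n - i + 1)

lemma posIdx_neg (n b c : ℤ) (hb : b ≤ -1) : posIdx n b c = b * n + c - 1 := by
  rw [posIdx, if_neg (by omega)]

lemma posIdx_one (n c : ℤ) : posIdx n 1 c = c := by
  rw [posIdx, if_pos (by omega)]; ring

lemma posIdx_neg_le (n b c : ℤ) (hn : 1 ≤ n) (hb : b ≤ -1) (hcn : c ≤ n) :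
    posIdx n b c ≤ -1 := by
  rw [posIdx_neg n b c hb]
  have h := mul_le_mul_of_nonneg_right hb (show (0:ℤ) ≤ n by omega)
  linarith

lemma iseq_at (n b c : ℤ) (hn : 1 ≤ n) (hb : b ≤ -1) (hc1 : 1 ≤ c) (hcn : c ≤ n) :
    iseqA n (posIdx n b c) = c := by
  have h0 : posIdx n b c ≤ -1 := posIdx_neg_le n b c hn hb hcn
  rw [posIdx_neg n b c hb] at h0 ⊢
  rw [iseqA, if_neg (by omega)]
  have h1 : b * n + c - 1 = (c - 1) + n * b := by ring
  rw [h1, Int.add_mul_emod_self_left, Int.emod_eq_of_lt (by omega) (by omega)]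
  ring

lemma decomp (n p : ℤ) (hn : 1 ≤ n) (hp : p ≤ -1) :
    1 ≤ p % n + 1 ∧ p % n + 1 ≤ n ∧ p / n ≤ -1 ∧ posIdx n (p / n) (p % n + 1) = p := by
  have hr1 : 0 ≤ p % n := Int.emod_nonneg p (by omega)
  have hr2 : p % n < n := Int.emod_lt_of_pos p (by omega)
  have heq : n * (p / n) + p % n = p := Int.mul_ediv_add_emod p n
  have hb : p / n ≤ -1 := by
    by_contra hcon
    push_neg at hcon
    have : 0 ≤ n * (p / n) := mul_nonneg (by omega) (by omega)
    omega
  refine ⟨by omega, by omega, hb, ?_⟩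
  rw [posIdx_neg n _ _ hb]
  have := mul_comm (p / n) n
  linarith

lemma posIdx_inj (n b' c' b c : ℤ) (hn : 1 ≤ n) (hb' : b' ≠ 0) (hb : b ≤ -1)
    (hc'1 : 1 ≤ c') (hc'n : c' ≤ n) (hc1 : 1 ≤ c) (hcn : c ≤ n) :
    posIdx n b' c' = posIdx n b c ↔ b' = b ∧ c' = c := by
  constructor
  · intro h
    rw [posIdx_neg n b c hb] at h
    by_cases hbp : 0 < b'
    · rw [posIdx, if_pos hbp] at h
      have h1 : 0 ≤ (b' - 1) * n := mul_nonneg (by omega) (by omega)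
      have h2 : b * n ≤ -1 * n := mul_le_mul_of_nonneg_right hb (by omega)
      exfalso; linarith
    · rw [posIdx, if_neg hbp] at h
      have key : (b' - b) * n = c - c' := by linear_combination h
      have hbb : b' = b := by
        rcases lt_trichotomy b' b with hlt | heq | hgt
        · exfalso
          have h2 := mul_le_mul_of_nonneg_right (show b' - b ≤ -1 by omega)
            (show (0:ℤ) ≤ n by omega)
          rw [key] at h2; linarith
        · exact heq
        · exfalso
          have h2 := mul_le_mul_of_nonneg_right (show 1 ≤ b' - b by omega)
            (show (0:ℤ) ≤ n by omega)
          rw [key] at h2; linarith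
      refine ⟨hbb, ?_⟩
      rw [hbb] at key; simp at key; omega
  · rintro ⟨rfl, rfl⟩; rfl

lemma termF_apply (n b c t : ℤ) :
    (termF n b c) t = if 1 ≤ c ∧ c ≤ n ∧ t = posIdx n b c then 1 else 0 := by
  rw [termF]
  by_cases h : 1 ≤ c ∧ c ≤ n
  · rw [if_pos h, Finsupp.single_apply]
    by_cases ht : t = posIdx n b c
    · rw [if_pos ht.symm, if_pos ⟨h.1, h.2, ht⟩]
    · rw [if_neg (fun hh => ht hh.symm), if_neg (by tauto)]
  · rw [if_neg h, if_neg (by tauto)]; rfl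

lemma kp_at (n b c : ℤ) (hn : 1 ≤ n) (hb : b ≤ -1) (hc1 : 1 ≤ c) (hcn : c ≤ n) :
    kpA n (posIdx n b c) = posIdx n (if b = -1 then 1 else b + 1) c := by
  rw [posIdx_neg n b c hb, kpA]
  by_cases hb1 : b = -1
  · subst hb1
    rw [if_pos (by constructor <;> omega), if_pos rfl, posIdx_one]; ring
  · have h2 := mul_le_mul_of_nonneg_right (show b ≤ -2 by omega) (show (0:ℤ) ≤ n by omega)
    rw [if_neg (by omega), if_neg hb1, posIdx_neg n _ c (by omega)]; ring

lemma km_at (n b c : ℤ) (hn : 1 ≤ n) (hb : b ≤ -1) (hc1 : 1 ≤ c) (hcn : c ≤ n) :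
    kmA n (posIdx n b c) = posIdx n (b - 1) c := by
  have h0 : posIdx n b c ≤ -1 := posIdx_neg_le n b c hn hb hcn
  rw [posIdx_neg n b c hb] at h0 ⊢
  rw [kmA, if_neg (by omega), posIdx_neg n _ c (by omega)]; ring

end HNproof

noncomputable section HNproof2

set_option maxHeartbeats 2000000 in

lemma betaBar_explicit (n : ℤ) (lam : ℤ → ℤ) (b c : ℤ) (hn : 1 ≤ n) (hb : b ≤ -1)
    (hc1 : 1 ≤ c) (hcn : c ≤ n) :
    betaBarG aA lam (iseqA n) (kpA n) (posIdx n b c) =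
      ((if b = -1 then -(lam c : ℚ) else 0),
       termF n b c + termF n (if b = -1 then 1 else b + 1) c
         - termF n b (c + 1) - termF n (if b = -1 then 1 else b + 1) (c - 1)) := by
  have hple : posIdx n b c ≤ -1 := posIdx_neg_le n b c hn hb hcn
  have hkp : kpA n (posIdx n b c) = posIdx n (if b = -1 then 1 else b + 1) c :=
    kp_at n b c hn hb hc1 hcn
  have hι : iseqA n (posIdx n b c) = c := iseq_at n b c hn hb hc1 hcn
  have h1 : (betaBarG aA lam (iseqA n) (kpA n) (posIdx n b c)).1 =
      (if b = -1 then -(lam c : ℚ) else 0) := by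
    simp only [betaBarG]
    by_cases hb1 : b = -1
    · rw [if_pos ⟨hple, by rw [hkp, if_pos hb1, posIdx_one]; omega⟩, hι, if_pos hb1]
    · rw [if_neg, if_neg hb1]
      rintro ⟨-, hh⟩
      rw [hkp, if_neg hb1] at hh
      have := posIdx_neg_le n (b+1) c hn (by omega) hcn
      omega
  have h2 : (betaBarG aA lam (iseqA n) (kpA n) (posIdx n b c)).2 =
      termF n b c + termF n (if b = -1 then 1 else b + 1) c
        - termF n b (c + 1) - termF n (if b = -1 then 1 else b + 1) (c - 1) := by
    ext t
    simp only [betaBarG, Finsupp.onFinset_apply, Finsupp.sub_apply, Finsupp.add_apply,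
      termF_apply, hkp, hι]
    by_cases hb1 : b = -1
    · subst hb1
      rw [if_pos rfl]
      rw [posIdx_neg n (-1) c (by omega), posIdx_neg n (-1) (c+1) (by omega),
        posIdx_one, posIdx_one]
      by_cases hbet : -1 * n + c - 1 < t ∧ t < c ∧ t ≠ 0
      · by_cases ht : t < 0
        · have hm : t % n = t + n := by
            conv_lhs => rw [show t = (t + n) + n * (-1) by ring]
            rw [Int.add_mul_emod_self_left]
            exact Int.emod_eq_of_lt (by omega) (by omega)
          have hι2 : iseqA n t = t + n + 1 := by
            rw [iseqA, if_neg (by omega), hm]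
          rw [hι2, aA]
          clear hm hι2
          split_ifs <;> first | (exfalso; omega) | norm_num
        · have hι2 : iseqA n t = t := by
            rw [iseqA, if_pos (by omega), Int.emod_eq_of_lt (by omega) (by omega)]
            ring
          rw [hι2, aA]
          clear hι2
          split_ifs <;> first | (exfalso; omega) | norm_num
      · split_ifs <;> first | (exfalso; omega) | norm_num
    · rw [if_neg hb1]
      have hbn : b * n ≤ -2 * n :=
        mul_le_mul_of_nonneg_right (show b ≤ -2 by omega) (by omega)
      rw [posIdx_neg n b c hb, posIdx_neg n b (c+1) hb,
        posIdx_neg n (b+1) c (by omega), posIdx_neg n (b+1) (c-1) (by omega)]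
      obtain ⟨q, hq⟩ : ∃ q, q = b * n := ⟨_, rfl⟩
      rw [← hq] at hbn ⊢
      have hq2 : (b + 1) * n = q + n := by rw [hq]; ring
      rw [hq2]
      by_cases hbet : q + c - 1 < t ∧ t < q + n + c - 1 ∧ t ≠ 0
      · have ht : t ≤ -1 := by omega
        by_cases hreg : t - q ≤ n - 1
        · have hm : t % n = t - q := by
            conv_lhs => rw [show t = (t - q) + n * b by rw [hq]; ring]
            rw [Int.add_mul_emod_self_left]
            exact Int.emod_eq_of_lt (by omega) (by omega)
          have hι2 : iseqA n t = t - q + 1 := by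
            rw [iseqA, if_neg (by omega), hm]
          rw [hι2, aA]
          clear hm hι2 hq
          split_ifs <;> first | (exfalso; omega) | norm_num
        · have hm : t % n = t - q - n := by
            conv_lhs => rw [show t = (t - q - n) + n * (b + 1) by rw [hq]; ring]
            rw [Int.add_mul_emod_self_left]
            exact Int.emod_eq_of_lt (by omega) (by omega)
          have hι2 : iseqA n t = t - q - n + 1 := by
            rw [iseqA, if_neg (by omega), hm]
          rw [hι2, aA]
          clear hm hι2 hq
          split_ifs <;> first | (exfalso; omega) | norm_num
      · clear hq
        split_ifs <;> first | (exfalso; omega) | norm_num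
  exact Prod.ext h1 h2

end HNproof2

noncomputable section HNproof3

lemma bkF_ne_zero (j k : ℤ) (hj : 1 ≤ j) : bkF j k ≠ 0 := by
  unfold bkF; split_ifs <;> omega

lemma PhiCoef_apply (n j i : ℤ) (μ : ℤ → ℤ) (hn : 1 ≤ n) (hj : 1 ≤ j)
    (b c : ℤ) (hb : b ≤ -1) (hc1 : 1 ≤ c) (hcn : c ≤ n) :
    (PhiCoef n j i μ) (posIdx n b c) =
      if 1 ≤ b + j + 1 ∧ b + j + 1 ≤ i + 1 then
        ((if i - (b + j + 1) + 1 + μ (b + j + 1) = c then (1:ℚ) else 0)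
          - if i - (b + j + 1) + 1 + μ (b + j + 1 - 1) = c then 1 else 0)
      else 0 := by
  have key : ∀ k col, k ≠ b + j + 1 →
      (termF n (bkF j k) col) (posIdx n b c) = 0 := by
    intro k col hk
    rw [termF_apply, if_neg]
    rintro ⟨h1, h2, h3⟩
    have hh := (posIdx_inj n (bkF j k) col b c hn (bkF_ne_zero j k hj) hb h1 h2 hc1 hcn).mp h3.symm
    rcases hh with ⟨hbb, -⟩
    unfold bkF at hbb
    revert hbb; split_ifs <;> omega
  have key2 : ∀ col, (termF n (bkF j (b + j + 1)) col) (posIdx n b c)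
      = if col = c then 1 else 0 := by
    intro col
    have hbk : bkF j (b + j + 1) = b := by unfold bkF; rw [if_pos (by omega)]; ring
    rw [termF_apply, hbk]
    by_cases hcol : col = c
    · subst hcol; rw [if_pos ⟨hc1, hcn, rfl⟩, if_pos rfl]
    · rw [if_neg, if_neg hcol]
      rintro ⟨h1, h2, h3⟩
      exact hcol ((posIdx_inj n b col b c hn (by omega) hb h1 h2 hc1 hcn).mp h3.symm).2
  rw [PhiCoef, Finset.sum_apply']
  by_cases hk0 : 1 ≤ b + j + 1 ∧ b + j + 1 ≤ i + 1
  · rw [if_pos hk0]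
    rw [Finset.sum_eq_single_of_mem (b + j + 1) (Finset.mem_Icc.mpr (by omega))]
    · rw [Finsupp.sub_apply, key2, key2]
    · intro k hk hne
      rw [Finsupp.sub_apply, key _ _ hne, key _ _ hne, sub_zero]
  · rw [if_neg hk0, Finset.sum_eq_zero]
    intro k hk
    simp only [Finset.mem_Icc] at hk
    rw [Finsupp.sub_apply, key _ _ (by omega), key _ _ (by omega), sub_zero]

lemma PhiCoef_update (n j i : ℤ) (μ : ℤ → ℤ) (k0 w : ℤ) (h1 : 1 ≤ k0) (h2 : k0 ≤ i) :
    PhiCoef n j i (Function.update μ k0 w) =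
      PhiCoef n j i μ
        + (termF n (bkF j k0) (i - k0 + 1 + w) - termF n (bkF j k0) (i - k0 + 1 + μ k0))
        + (termF n (bkF j (k0 + 1)) (i - (k0 + 1) + 1 + μ k0)
            - termF n (bkF j (k0 + 1)) (i - (k0 + 1) + 1 + w)) := by
  have h : PhiCoef n j i (Function.update μ k0 w) - PhiCoef n j i μ =
      (termF n (bkF j k0) (i - k0 + 1 + w) - termF n (bkF j k0) (i - k0 + 1 + μ k0))
        + (termF n (bkF j (k0 + 1)) (i - (k0 + 1) + 1 + μ k0)
            - termF n (bkF j (k0 + 1)) (i - (k0 + 1) + 1 + w)) := by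
    rw [PhiCoef, PhiCoef, ← Finset.sum_sub_distrib]
    rw [← Finset.sum_subset (s₁ := {k0, k0 + 1})
        (by intro x hx; simp only [Finset.mem_insert, Finset.mem_singleton] at hx
            simp only [Finset.mem_Icc]; omega)
        (by intro x hx hnx
            simp only [Finset.mem_insert, Finset.mem_singleton] at hnx
            push_neg at hnx
            rw [Function.update_of_ne (by omega : x ≠ k0) w μ,
              Function.update_of_ne (by omega : x - 1 ≠ k0) w μ]
            exact sub_self _)]
    rw [Finset.sum_insert (by simp only [Finset.mem_singleton]; omega),
      Finset.sum_singleton]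
    rw [Function.update_self, Function.update_of_ne (by omega : k0 - 1 ≠ k0) w μ,
      Function.update_of_ne (by omega : k0 + 1 ≠ k0) w μ]
    rw [show k0 + 1 - 1 = k0 from by omega, Function.update_self]
    abel
  rw [sub_eq_iff_eq_add] at h
  rw [h]; abel

lemma CA_nonneg (lam : ℤ → ℤ) (n j i : ℤ) : 0 ≤ CA lam n j i := by
  rw [CA]; split_ifs with h
  · exact (Finset.le_fold_max _).mpr (Or.inl le_rfl)
  · exact le_rfl

lemma CA_ge (lam : ℤ → ℤ) (n j i m : ℤ) (h : 1 ≤ j ∧ j ≤ i ∧ i ≤ n)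
    (hm : m ∈ Finset.Icc (i - j + 1) (n - j + 1)) :
    -(∑ t ∈ Finset.Icc (i - j + 1) m, lam t) ≤ CA lam n j i := by
  rw [CA, if_pos h]
  exact (Finset.le_fold_max _).mpr (Or.inr ⟨m, hm, le_rfl⟩)

lemma PhiConst_nonneg (lam : ℤ → ℤ) (n j i : ℤ) (hn : 1 ≤ n) (hj : 1 ≤ j)
    (hi1 : 1 ≤ i) (hin : i ≤ n) (μ : ℤ → ℤ) (hA : Adm n i μ) :
    0 ≤ PhiConst lam n j i μ := by
  obtain ⟨h0, htop, hmono, hbd⟩ := hA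
  rw [PhiConst]
  by_cases hμ : μ j ≤ 0
  · have hz : μ j = 0 := le_antisymm hμ (hbd j hj).1
    rw [hz, Finset.Icc_eq_empty (by omega), Finset.sum_empty, add_zero]
    exact_mod_cast CA_nonneg lam n j i
  · push_neg at hμ
    have hji : j ≤ i := by
      by_contra hc; push_neg at hc
      have := htop j (by omega); omega
    have hbdj := (hbd j hj).2
    have hle := CA_ge lam n j i (i - j + μ j) ⟨hj, hji, hin⟩
      (Finset.mem_Icc.mpr ⟨by omega, by omega⟩)
    have hcast : ∑ t ∈ Finset.Icc (i - j + 1) (i - j + μ j), (lam t : ℚ)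
        = ((∑ t ∈ Finset.Icc (i - j + 1) (i - j + μ j), lam t : ℤ) : ℚ) := by
      push_cast; rfl
    rw [hcast]
    have hz : (0:ℤ) ≤ CA lam n j i + ∑ t ∈ Finset.Icc (i - j + 1) (i - j + μ j), lam t := by
      linarith
    exact_mod_cast hz

def mu0 (n i : ℤ) : ℤ → ℤ := fun k => if k ≤ 0 then n - i + 2 else 0

lemma mu0_adm (n i : ℤ) (hi1 : 1 ≤ i) (hin : i ≤ n) : Adm n i (mu0 n i) := by
  refine ⟨?_, fun k hk => ?_, fun k hk => ?_, fun k hk => ?_⟩ <;>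
    simp only [mu0] <;> split_ifs <;> omega

lemma gen_eq (n : ℤ) (lam : ℤ → ℤ) (j i : ℤ) (hn : 1 ≤ n) (hj : 1 ≤ j)
    (hi1 : 1 ≤ i) (hin : i ≤ n) :
    genA n lam j i = (PhiConst lam n j i (mu0 n i), PhiCoef n j i (mu0 n i)) := by
  have hm1 : mu0 n i 1 = 0 := by simp only [mu0]; rw [if_neg (by omega)]
  have hm0 : mu0 n i 0 = n - i + 2 := by simp only [mu0]; rw [if_pos le_rfl]
  have hmj : mu0 n i j = 0 := by simp only [mu0]; rw [if_neg (by omega)]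
  have h1 : PhiConst lam n j i (mu0 n i) = (CA lam n j i : ℚ) := by
    rw [PhiConst, hmj, Finset.Icc_eq_empty (by omega), Finset.sum_empty, add_zero]
  have h2 : PhiCoef n j i (mu0 n i) = Finsupp.single (posIdx n (-j) i) 1 := by
    rw [PhiCoef]
    rw [Finset.sum_eq_single_of_mem 1 (Finset.mem_Icc.mpr ⟨le_rfl, by omega⟩)]
    · have hbk : bkF j 1 = -j := by unfold bkF; rw [if_pos hj]; ring
      rw [hbk, show (1:ℤ) - 1 = 0 from rfl, hm1, hm0]
      rw [show i - 1 + 1 + 0 = i from by ring,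
        show i - 1 + 1 + (n - i + 2) = n + 2 from by ring]
      rw [termF, if_pos ⟨hi1, hin⟩, termF, if_neg (by omega), sub_zero]
    · intro k hk hne
      simp only [Finset.mem_Icc] at hk
      have e1 : mu0 n i k = 0 := by simp only [mu0]; rw [if_neg (by omega)]
      have e2 : mu0 n i (k - 1) = 0 := by simp only [mu0]; rw [if_neg (by omega)]
      rw [e1, e2, sub_self]
  rw [genA, h1, h2]

lemma sbar_fix (n : ℤ) (lam : ℤ → ℤ) (q : ℤ) (φ : Aff) (h : φ.2 q = 0) :
    SbarA n lam q φ = φ := by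
  rw [SbarA, SbarG, if_neg (by rw [h]; exact lt_irrefl 0), h]
  simp

end HNproof3

noncomputable section HNproof4

lemma step_lemma (n : ℤ) (lam : ℤ → ℤ) (j i : ℤ) (hn : 1 ≤ n) (hj : 1 ≤ j)
    (hi1 : 1 ≤ i) (hin : i ≤ n) (μ : ℤ → ℤ) (hA : Adm n i μ) (m : ℤ) (hm : 1 ≤ m) :
    ∃ μ', Adm n i μ' ∧
      SbarA n lam (-m) (PhiConst lam n j i μ, PhiCoef n j i μ)
        = (PhiConst lam n j i μ', PhiCoef n j i μ') := by
  obtain ⟨hA0, hAtop, hAmono, hAbd⟩ := hA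
  obtain ⟨hc1, hcn, hb, hpos⟩ := decomp n (-m) hn (by omega)
  set b := -m / n with hbdef
  set c := -m % n + 1 with hcdef
  set k := b + j + 1 with hkdef
  have hkj : k ≤ j := by omega
  have hval : (PhiCoef n j i μ) (-m) =
      if 1 ≤ k ∧ k ≤ i + 1 then
        ((if i - k + 1 + μ k = c then (1:ℚ) else 0)
          - if i - k + 1 + μ (k - 1) = c then 1 else 0)
      else 0 := by
    rw [← hpos]; exact PhiCoef_apply n j i μ hn hj b c hb hc1 hcn
  by_cases hk0 : 1 ≤ k ∧ k ≤ i + 1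
  case neg =>
    refine ⟨μ, ⟨hA0, hAtop, hAmono, hAbd⟩, sbar_fix n lam (-m) _ ?_⟩
    show (PhiCoef n j i μ) (-m) = 0
    rw [hval, if_neg hk0]
  case pos =>
  by_cases hcc1 : i - k + 1 + μ k = c
  · by_cases hcc2 : i - k + 1 + μ (k - 1) = c
    · refine ⟨μ, ⟨hA0, hAtop, hAmono, hAbd⟩, sbar_fix n lam (-m) _ ?_⟩
      show (PhiCoef n j i μ) (-m) = 0
      rw [hval, if_pos hk0, if_pos hcc1, if_pos hcc2, sub_self]
    · -- push case
      have hki : k ≤ i := by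
        by_contra hcon; push_neg at hcon
        rw [show k = i + 1 from by omega] at hcc1
        have := hAtop (i + 1) le_rfl
        omega
      have hlt : μ k < μ (k - 1) := by
        have h1 := hAmono k (by omega); omega
      set μ' := Function.update μ k (μ k + 1) with hμ'
      have hupk : μ' k = μ k + 1 := Function.update_self k (μ k + 1) μ
      have hupne : ∀ x, x ≠ k → μ' x = μ x :=
        fun x hx => Function.update_of_ne hx (μ k + 1) μ
      have hA' : Adm n i μ' := by
        refine ⟨?_, ?_, ?_, ?_⟩
        · rw [hupne 0 (by omega)]; exact hA0
        · intro x hx; rw [hupne x (by omega)]; exact hAtop x hx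
        · intro x hx
          by_cases hxk : x = k
          · subst hxk; rw [hupk, hupne _ (by omega)]; omega
          · by_cases hxk1 : x = k + 1
            · subst hxk1
              rw [show k + 1 - 1 = k from by omega, hupk, hupne (k + 1) (by omega)]
              have h5 := hAmono (k + 1) (by omega)
              rw [show k + 1 - 1 = k from by omega] at h5
              omega
            · rw [hupne x hxk, hupne (x - 1) (by omega)]
              exact hAmono x hx
        · intro x hx
          by_cases hxk : x = k
          · subst hxk; rw [hupk]
            refine ⟨by have := (hAbd k (by omega)).1; omega, ?_⟩
            by_cases hk1 : k = 1
            · omega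
            · have h1 := hAmono k (by omega)
              have h2 := (hAbd (k - 1) (by omega)).2
              omega
          · rw [hupne x hxk]; exact hAbd x hx
      refine ⟨μ', hA', ?_⟩
      have hv : (PhiCoef n j i μ) (-m) = 1 := by
        rw [hval, if_pos hk0, if_pos hcc1, if_neg hcc2]; norm_num
      rw [SbarA, SbarG]
      dsimp only
      rw [hv, if_pos (by norm_num : (0:ℚ) < 1), one_mul, one_smul]
      rw [← hpos, betaBar_explicit n lam b c hn hb hc1 hcn]
      have hbk : bkF j k = b := by unfold bkF; rw [if_pos hkj]; ring
      have hbk1 : bkF j (k + 1) = if b = -1 then 1 else b + 1 := by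
        unfold bkF; split_ifs <;> omega
      refine Prod.ext ?_ ?_ <;> dsimp only
      · by_cases hbm : b = -1
        · have hkjeq : k = j := by omega
          rw [if_pos hbm]
          have hμ'j : μ' j = μ j + 1 := by rw [← hkjeq]; exact hupk
          rw [hkjeq] at hcc1
          have hμjnn : 0 ≤ μ j := (hAbd j hj).1
          rw [PhiConst, PhiConst, hμ'j]
          have hins : Finset.Icc (i - j + 1) (i - j + (μ j + 1))
              = insert (i - j + μ j + 1) (Finset.Icc (i - j + 1) (i - j + μ j)) := by
            ext x; simp only [Finset.mem_insert, Finset.mem_Icc]; omega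
          rw [hins, Finset.sum_insert (by simp only [Finset.mem_Icc]; omega)]
          rw [show i - j + μ j + 1 = c from by omega]
          ring
        · rw [if_neg hbm]
          have hμ'j : μ' j = μ j := hupne j (by omega)
          rw [PhiConst, PhiConst, hμ'j]; ring
      · rw [hμ', PhiCoef_update n j i μ k (μ k + 1) (by omega) hki]
        rw [show i - k + 1 + (μ k + 1) = c + 1 from by omega,
          show i - k + 1 + μ k = c from hcc1,
          show i - (k + 1) + 1 + μ k = c - 1 from by omega,
          show i - (k + 1) + 1 + (μ k + 1) = c from by omega,
          hbk, hbk1]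
        abel
  · by_cases hcc2 : i - k + 1 + μ (k - 1) = c
    · -- pull case
      have hk2 : 2 ≤ k := by
        by_contra hcon; push_neg at hcon
        rw [show k = 1 from by omega] at hcc2
        norm_num at hcc2
        omega
      have hlt : μ k < μ (k - 1) := by
        have h1 := hAmono k (by omega); omega
      have hnn : 0 ≤ μ k := (hAbd k (by omega)).1
      set k0 := k - 1 with hk0def
      set μ' := Function.update μ k0 (μ k0 - 1) with hμ'
      have hupk : μ' k0 = μ k0 - 1 := Function.update_self k0 (μ k0 - 1) μ
      have hupne : ∀ x, x ≠ k0 → μ' x = μ x :=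
        fun x hx => Function.update_of_ne hx (μ k0 - 1) μ
      have hA' : Adm n i μ' := by
        refine ⟨?_, ?_, ?_, ?_⟩
        · rw [hupne 0 (by omega)]; exact hA0
        · intro x hx; rw [hupne x (by omega)]; exact hAtop x hx
        · intro x hx
          by_cases hxk : x = k0
          · subst hxk; rw [hupk, hupne _ (by omega)]
            have h5 := hAmono k0 (by omega)
            omega
          · by_cases hxk1 : x = k0 + 1
            · subst hxk1
              rw [show k0 + 1 - 1 = k0 from by omega, hupk,
                show k0 + 1 = k from by omega, hupne k (by omega)]
              omega
            · rw [hupne x hxk, hupne (x - 1) (by omega)]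
              exact hAmono x hx
        · intro x hx
          by_cases hxk : x = k0
          · subst hxk; rw [hupk]
            have h1 := (hAbd k0 (by omega)).2
            have h2 := hAmono k (by omega)
            omega
          · rw [hupne x hxk]; exact hAbd x hx
      refine ⟨μ', hA', ?_⟩
      have hv : (PhiCoef n j i μ) (-m) = -1 := by
        rw [hval, if_pos hk0, if_neg hcc1, if_pos hcc2]; norm_num
      rw [SbarA, SbarG]
      dsimp only
      rw [hv, if_neg (by norm_num : ¬(0:ℚ) < -1)]
      have hkm : kmA n (-m) = posIdx n (b - 1) c := by
        rw [← hpos]; exact km_at n b c hn hb hc1 hcn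
      rw [hkm, betaBar_explicit n lam (b - 1) c hn (by omega) hc1 hcn]
      have hbk0 : bkF j k0 = b - 1 := by unfold bkF; rw [if_pos (by omega)]; omega
      have hbk0p : bkF j (k0 + 1) = b := by unfold bkF; rw [if_pos (by omega)]; omega
      refine Prod.ext ?_ ?_ <;> dsimp only
      · rw [if_neg (show ¬(b - 1 = -1) from by omega)]
        have hμ'j : μ' j = μ j := hupne j (by omega)
        rw [PhiConst, PhiConst, hμ'j]; ring
      · rw [if_neg (show ¬(b - 1 = -1) from by omega),
          show b - 1 + 1 = b from by ring]
        rw [hμ', PhiCoef_update n j i μ k0 (μ k0 - 1) (by omega) (by omega)]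
        rw [show i - k0 + 1 + (μ k0 - 1) = c from by omega,
          show i - k0 + 1 + μ k0 = c + 1 from by omega,
          show i - (k0 + 1) + 1 + μ k0 = c from by omega,
          show i - (k0 + 1) + 1 + (μ k0 - 1) = c - 1 from by omega,
          hbk0, hbk0p]
        rw [neg_smul, one_smul]
        abel
    · refine ⟨μ, ⟨hA0, hAtop, hAmono, hAbd⟩, sbar_fix n lam (-m) _ ?_⟩
      show (PhiCoef n j i μ) (-m) = 0
      rw [hval, if_pos hk0, if_neg hcc1, if_neg hcc2, sub_self]

end HNproof4

/-- Type `A_n` (key step of Hoshino–Nakashima, Theorem 5.2): every element of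
`Ξ'_ι[λ]` has nonnegative constant term; equivalently, the zero vector lies in
`Σ'_ι[λ]`. -/
theorem XiPrime_constant_term_nonneg_A_n
    (n : ℤ) (hn : 1 ≤ n) (lam : ℤ → ℤ) (i0 : ℤ) (hi0 : 0 ≤ i0) (hi0n : i0 ≤ n)
    (hpos : ∀ i : ℤ, 1 ≤ i → i ≤ i0 → 0 < lam i)
    (hneg : ∀ i : ℤ, i0 < i → i ≤ n → lam i ≤ 0) :
    ∀ φ ∈ XiPrimeA n lam, 0 ≤ φ.1 := by
  intro φ hφ
  obtain ⟨js, hjs, j, i, hj, hi1, hin, rfl⟩ := hφ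
  have main : ∀ L : List ℤ, (∀ m ∈ L, 1 ≤ m) → ∀ μ : ℤ → ℤ, Adm n i μ →
      ∃ μ', Adm n i μ' ∧
        L.foldl (fun ψ m => SbarA n lam (-m) ψ)
            (PhiConst lam n j i μ, PhiCoef n j i μ)
          = (PhiConst lam n j i μ', PhiCoef n j i μ') := by
    intro L
    induction L with
    | nil => exact fun _ μ hA => ⟨μ, hA, rfl⟩
    | cons a L ih =>
      intro hL μ hA
      obtain ⟨μ1, hA1, heq1⟩ :=
        step_lemma n lam j i hn hj hi1 hin μ hA a (hL a (by simp))
      obtain ⟨μ2, hA2, heq2⟩ := ih (fun m hm => hL m (by simp [hm])) μ1 hA1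
      exact ⟨μ2, hA2, by rw [List.foldl_cons, heq1, heq2]⟩
  rw [gen_eq n lam j i hn hj hi1 hin]
  obtain ⟨μ', hA', heq⟩ := main js hjs (mu0 n i) (mu0_adm n i hi1 hin)
  rw [heq]
  exact PhiConst_nonneg lam n j i hn hj hi1 hin μ' hA'
end

section
/- Suppose x = (x_{−m})_{m≥1} is a finitely supported family of integers such that for all k ≥ 1 one has x_{−k} ≤ 0, x_{−k} + C_{−k} ≥ 0, and σ_{−k}(x) ≤ 0. Then x_{−k} = −C_{−k} for all k ≥ 1. (This is the uniqueness of the highest weight vector in Σ_ι[λ] ∩ Σ'_ι[λ], the key step proving B_0(λ) = Σ_ι[λ] ∩ Σ'_ι[λ] in Theorem 6.1.) -/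
noncomputable section

/-- `C_{−k} = (−(k−1)λ_1 − kλ_2)_+`, type `A_1^{(1)}`. -/
def CB (lam1 lam2 k : ℤ) : ℤ := max 0 (-(k - 1) * lam1 - k * lam2)

/-- `σ_{−k}(x) = −λ_{ε(k)} + x_{−k} + Σ_{m=1}^{k−1} c_{k,m} x_{−m}` where
`ε(k) = 2` for `k` odd, `ε(k) = 1` for `k` even, and `c_{k,m} = 2` if
`k ≡ m (mod 2)`, `c_{k,m} = −2` otherwise; here `x m` denotes the
coordinate `x_{−m}`. -/
def sigmaB (lam1 lam2 : ℤ) (x : ℤ → ℤ) (k : ℤ) : ℤ :=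
  -(if k % 2 = 0 then lam1 else lam2) + x k +
    ∑ m ∈ Finset.Icc 1 (k - 1), (if k % 2 = m % 2 then 2 else -2) * x m

end

/-- If `C_{k+1} > 0` then `C_k = C_{k+1} + (λ₁+λ₂)`. -/
lemma CB_step (lam1 lam2 n : ℤ) (hlev : 0 < lam1 + lam2)
    (h : 0 < CB lam1 lam2 (n + 1)) :
    CB lam1 lam2 n = CB lam1 lam2 (n + 1) + (lam1 + lam2) := by
  unfold CB at h ⊢
  have e : -(n + 1 - 1) * lam1 - (n + 1) * lam2
      = (-(n - 1) * lam1 - n * lam2) - (lam1 + lam2) := by ring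
  rw [e] at h ⊢
  generalize (-(n - 1) * lam1 - n * lam2) = A at h ⊢
  omega

/-- The basic recursion `σ_{k+1} + σ_k = x_{k+1} − x_k − (λ₁+λ₂)`. -/
lemma sigma_rec (lam1 lam2 : ℤ) (x : ℤ → ℤ) (k : ℤ) (hk : 1 ≤ k) :
    sigmaB lam1 lam2 x (k + 1) + sigmaB lam1 lam2 x k
      = x (k + 1) - x k - (lam1 + lam2) := by
  unfold sigmaB
  have e1 : k + 1 - 1 = k := by ring
  have hins : Finset.Icc (1:ℤ) k = insert k (Finset.Icc 1 (k - 1)) := by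
    ext m; simp [Finset.mem_Icc]; omega
  have hnot : k ∉ Finset.Icc (1:ℤ) (k - 1) := by simp [Finset.mem_Icc]
  rw [e1, hins, Finset.sum_insert hnot]
  have hlam : (if (k + 1) % 2 = 0 then lam1 else lam2)
      + (if k % 2 = 0 then lam1 else lam2) = lam1 + lam2 := by
    have hc : (k + 1) % 2 = 0 ∧ k % 2 = 1 ∨ (k + 1) % 2 = 1 ∧ k % 2 = 0 := by omega
    rcases hc with ⟨ha, hb⟩ | ⟨ha, hb⟩ <;> simp [ha, hb] <;> ring
  have hck : (if (k + 1) % 2 = k % 2 then (2:ℤ) else -2) = -2 := by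
    have : (k + 1) % 2 ≠ k % 2 := by omega
    simp [this]
  have hsum : ∑ m ∈ Finset.Icc 1 (k - 1),
        (if (k + 1) % 2 = m % 2 then (2:ℤ) else -2) * x m
      = - ∑ m ∈ Finset.Icc 1 (k - 1),
        (if k % 2 = m % 2 then (2:ℤ) else -2) * x m := by
    rw [← Finset.sum_neg_distrib]
    apply Finset.sum_congr rfl
    intro m _
    have : (if (k + 1) % 2 = m % 2 then (2:ℤ) else -2)
        = -(if k % 2 = m % 2 then (2:ℤ) else -2) := by
      split_ifs with hA hB hB <;> omega
    rw [this]; ring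
  rw [hsum, hck]
  linarith [hlam]

/-- Type `A_1^{(1)}` (uniqueness of the highest weight vector in
`Σ_ι[λ] ∩ Σ'_ι[λ]`, the key step of Hoshino–Nakashima, Theorem 6.1):
if a finitely supported family `x = (x_{−m})_{m≥1}` of integers satisfies
`x_{−k} ≤ 0`, `x_{−k} + C_{−k} ≥ 0` and `σ_{−k}(x) ≤ 0` for all `k ≥ 1`,
then `x_{−k} = −C_{−k}` for all `k ≥ 1`. -/
theorem hwv_unique_A_1_1
    (lam1 lam2 : ℤ) (h1 : 0 < lam1) (h2 : lam2 ≤ 0) (hlev : 0 < lam1 + lam2)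
    (x : ℤ → ℤ)
    (hfin : {m : ℤ | 1 ≤ m ∧ x m ≠ 0}.Finite)
    (hle : ∀ k : ℤ, 1 ≤ k → x k ≤ 0)
    (hge : ∀ k : ℤ, 1 ≤ k → 0 ≤ x k + CB lam1 lam2 k)
    (hsig : ∀ k : ℤ, 1 ≤ k → sigmaB lam1 lam2 x k ≤ 0) :
    ∀ k : ℤ, 1 ≤ k → x k = -CB lam1 lam2 k := by
  have key : ∀ k : ℤ, 1 ≤ k →
      x k = -CB lam1 lam2 k ∧ (0 < CB lam1 lam2 k → sigmaB lam1 lam2 x k = 0) := by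
    refine Int.le_induction ?_ ?_
    ·
      have hs := hsig 1 le_rfl
      have hg := hge 1 le_rfl
      have hIcc : Finset.Icc (1:ℤ) (1 - 1) = ∅ := Finset.Icc_eq_empty (by norm_num)
      have e : sigmaB lam1 lam2 x 1 = -lam2 + x 1 := by
        unfold sigmaB
        rw [hIcc]
        norm_num
      have eC : CB lam1 lam2 1 = -lam2 := by unfold CB; omega
      rw [e] at hs ⊢
      rw [eC] at hg ⊢
      constructor
      · omega
      · intro _; omega
    · intro n hn ih
      have hs := hsig (n + 1) (by omega)
      have hg := hge (n + 1) (by omega)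
      by_cases hpos : 0 < CB lam1 lam2 (n + 1)
      · have hstep := CB_step lam1 lam2 n hlev hpos
        have hCn : 0 < CB lam1 lam2 n := by omega
        obtain ⟨ihx, ihs⟩ := ih
        have hσn : sigmaB lam1 lam2 x n = 0 := ihs hCn
        have hrec := sigma_rec lam1 lam2 x n hn
        rw [hσn] at hrec
        -- σ_{n+1} = x_{n+1} - x n - (λ1+λ2) = x_{n+1} + C_{n+1}
        have hval : sigmaB lam1 lam2 x (n + 1) = x (n + 1) + CB lam1 lam2 (n + 1) := by
          omega
        exact ⟨by omega, fun _ => by omega⟩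
      · have hl := hle (n + 1) (by omega)
        have hC0 : CB lam1 lam2 (n + 1) = 0 := by
          unfold CB at hpos ⊢; omega
        constructor
        · omega
        · intro h; omega
  intro k hk
  exact (key k hk).1
end
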